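/- For k ≥ 3, the automorphism group of FHS(2k,k) equals the automorphism group of HS(2k,k); in particular |Aut(FHS(2k,k))| = 2·(2k-1)!. -/

import Mathlib

abbrev hsVert (n k : ℕ) : Type := {v : Finset ℕ // v ⊆ Finset.Icc 1 n ∧ v.card = k}

/-- The hyper-star graph `HS(n,k)` on the `k`-subsets of `X = {1,...,n}`:
`v, w` are adjacent iff `|v ∩ w| = k-1` and exactly one of `v, w` contains `1`. -/
def HS (n k : ℕ) : SimpleGraph (hsVert n k) :=
  SimpleGraph.fromRel (fun v w =>
    (v.1 ∩ w.1).card = k - 1 ∧ 1 ∈ v.1 ∧ 1 ∉ w.1)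

/-- The folded hyper-star graph `FHS(2k,k)`: edges of `HS(2k,k)` together with
the complement pairs `{v, X \\ v}`. -/
def FHS (k : ℕ) : SimpleGraph (hsVert (2*k) k) :=
  SimpleGraph.fromRel (fun v w =>
    ((v.1 ∩ w.1).card = k - 1 ∧ 1 ∈ v.1 ∧ 1 ∉ w.1) ∨ w.1 = Finset.Icc 1 (2*k) \ v.1)

/-- The automorphism group of a graph, as a subgroup of the permutations of the vertices. -/
def graphAut {V : Type*} (Γ : SimpleGraph V) : Subgroup (Equiv.Perm V) where
  carrier := {e | ∀ a b, Γ.Adj (e a) (e b) ↔ Γ.Adj a b}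
  one_mem' := by intro a b; simp
  mul_mem' := by
    intro e f he hf a b
    simp only [Equiv.Perm.mul_apply]
    rw [he, hf]
  inv_mem' := by
    intro e he a b
    have h := he (e⁻¹ a) (e⁻¹ b)
    simpa using h.symm

/-!
Every edge of `FHS(2k,k)` joins a vertex containing `1` to one that does not. Writing a vertex
`v ∋ 1` as the `(k-1)`-set `v \ {1}` of `Y = {2,…,2k}` and keeping a vertex `w ∌ 1` as a `k`-set
of `Y`, `HS(2k,k)` becomes the inclusion graph between two consecutive layers of the Boolean
lattice of `Y`, and the folding edges join disjoint sets.

For `k ≥ 3` an `HS`-edge lies on at most one 4-cycle of `FHS`, while a folding edge lies on at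
least two; hence every automorphism of `FHS` preserves `HS`. Conversely, `HS` is connected and
bipartite, so an automorphism of `HS` preserves or swaps the two sides, and after composing with
complementation it preserves them. It then induces inclusion-respecting bijections `g`, `h` of the
two layers, and these come from a permutation of `Y`: the point `y` goes to the unique point of
`h w` outside `g (w \ {y})`, which does not depend on the `k`-set `w ∋ y`. Relabelings of `Y`
and complementation commute with complementation, so they preserve `FHS` as well, and
`Aut = S_{2k-1} × C₂`.
-/

open Finset

namespace Finset

variable {α : Type*} [DecidableEq α]

theorem induction_on_exchange {p : Finset α → Prop} {s t : Finset α} (hst : #s = #t)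
    (hs : p s)
    (step : ∀ u, #u = #t → s ∩ t ⊆ u → u ⊆ s ∪ t → p u →
      ∀ a ∈ u, a ∉ t → ∀ b ∈ t, b ∉ u → p (insert b (u.erase a))) :
    p t := by
  suffices ∀ n u, #(t \ u) = n → #u = #t → s ∩ t ⊆ u → u ⊆ s ∪ t → p u → p t from
    this _ s rfl hst inter_subset_left subset_union_left hs
  intro n
  induction n with
  | zero =>
    intro u htu hut _ _ hu
    rwa [eq_of_subset_of_card_le (sdiff_eq_empty_iff_subset.1 (card_eq_zero.1 htu)) hut.le]
  | succ n ih =>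
    intro u htu hut hsu hus hu
    obtain ⟨b, hb⟩ : (t \ u).Nonempty := card_pos.1 (by omega)
    obtain ⟨a, ha⟩ : (u \ t).Nonempty := card_pos.1 (by rw [card_sdiff_comm hut]; omega)
    rw [mem_sdiff] at ha hb
    have hbu : b ∉ u.erase a := fun h => hb.2 (mem_of_mem_erase h)
    refine ih _ ?_ ?_ ?_ ?_ (step u hut hsu hus hu a ha.1 ha.2 b hb.1 hb.2)
    · have : t \ insert b (u.erase a) = (t \ u).erase b := by
        ext x; have := ha.2; simp only [mem_sdiff, mem_insert, mem_erase]; grind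
      rw [this, card_erase_of_mem (mem_sdiff.2 hb), htu]
      rfl
    · rw [card_insert_of_notMem hbu, card_erase_of_mem ha.1, ← hut]
      have := card_pos.2 ⟨a, ha.1⟩
      omega
    · intro x hx
      exact mem_insert_of_mem (mem_erase.2 ⟨by rintro rfl; exact ha.2 (mem_inter.1 hx).2, hsu hx⟩)
    · exact insert_subset (mem_union_right _ hb.1) ((erase_subset _ _).trans hus)

theorem union_eq_of_card_add_one {s t u : Finset α} (hs : s ⊆ u) (ht : t ⊆ u) (hst : s ≠ t)
    (hsu : #s + 1 = #u) (htu : #t + 1 = #u) : s ∪ t = u := by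
  have hts : ¬t ⊆ s := fun h => hst (eq_of_subset_of_card_le h (by omega)).symm
  have : #s < #(s ∪ t) := card_lt_card (ssubset_iff_subset_ne.2
    ⟨subset_union_left, fun h => hts (h ▸ subset_union_right)⟩)
  exact eq_of_subset_of_card_le (union_subset hs ht) (by omega)

theorem card_inter_eq_card_sub_one_iff {s t : Finset α} {a : α} (ha : a ∈ s) (hat : a ∉ t) :
    #(s ∩ t) = #s - 1 ↔ s.erase a ⊆ t := by
  have hst : s ∩ t = s.erase a ∩ t := by
    ext x
    simp only [mem_inter, mem_erase]
    exact ⟨fun h => ⟨⟨by rintro rfl; exact hat h.2, h.1⟩, h.2⟩, fun h => ⟨h.1.2, h.2⟩⟩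
  rw [hst, ← card_erase_of_mem ha]
  exact ⟨fun h => inter_eq_left.1 (eq_of_subset_of_card_le inter_subset_left h.ge),
    fun h => by rw [inter_eq_left.2 h]⟩

theorem erase_mem_powersetCard {Y w : Finset α} {n : ℕ} {y : α}
    (hw : w ∈ Y.powersetCard (n + 1)) (hy : y ∈ w) : w.erase y ∈ Y.powersetCard n := by
  rw [mem_powersetCard] at hw ⊢
  exact ⟨(erase_subset _ _).trans hw.1, by rw [card_erase_of_mem hy, hw.2]; rfl⟩

theorem exchange_mem_powersetCard {Y s : Finset α} {n : ℕ} {a b : α}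
    (hs : s ∈ Y.powersetCard n) (ha : a ∈ s) (hb : b ∈ Y) (hbs : b ∉ s) :
    insert b (s.erase a) ∈ Y.powersetCard n := by
  rw [mem_powersetCard] at hs ⊢
  refine ⟨insert_subset hb ((erase_subset _ _).trans hs.1), ?_⟩
  rw [card_insert_of_notMem fun h => hbs (mem_of_mem_erase h), card_erase_of_mem ha, hs.2]
  have := card_pos.2 ⟨a, ha⟩
  omega

/-- In the graph on the `r`- and `(r+1)`-subsets of a `(2r+1)`-set in which `S ~ w` iff `S ⊆ w`
or `S ∩ w = ∅`, the only 4-cycle `S w S' x` through an inclusion edge `S ⊆ w` uses two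
disjointness edges. -/
theorem disjoint_and_disjoint_of_square {Y S S' w x : Finset α} {r : ℕ} (hr : 2 ≤ r)
    (hY : #Y = 2 * r + 1) (hS : S ∈ Y.powersetCard r) (hS' : S' ∈ Y.powersetCard r)
    (hw : w ∈ Y.powersetCard (r + 1)) (hx : x ∈ Y.powersetCard (r + 1)) (hSw : S ⊆ w)
    (hS'w : S' ⊆ w ∨ Disjoint S' w) (hS'x : S' ⊆ x ∨ Disjoint S' x)
    (hSx : S ⊆ x ∨ Disjoint S x) (hSS' : S' ≠ S) (hxw : x ≠ w) :
    Disjoint S' w ∧ Disjoint S x := by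
  rw [mem_powersetCard] at hS hS' hw hx
  have disjoint_card_le {s t : Finset α} (hs : s ⊆ Y) (ht : t ⊆ Y) (hst : Disjoint s t) :
      #s + #t ≤ #Y := by
    rw [← card_union_of_disjoint hst]
    exact card_le_card (union_subset hs ht)
  rcases hS'w with hS'w | hS'w
  · exfalso
    have hU : S ∪ S' = w := union_eq_of_card_add_one hSw hS'w hSS'.symm
      (by rw [hS.2, hw.2]) (by rw [hS'.2, hw.2])
    -- `S` and `S'` share `r - 1 ≥ 1` points
    obtain ⟨t, ht⟩ : (S ∩ S').Nonempty := by
      have := card_union_add_card_inter S S'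
      rw [hU, hS.2, hS'.2, hw.2] at this
      exact card_pos.1 (by omega)
    rw [mem_inter] at ht
    rcases hSx with hSx | hSx <;> rcases hS'x with hS'x | hS'x
    · exact hxw (eq_of_subset_of_card_le (hU ▸ union_subset hSx hS'x) (by rw [hx.2, hw.2])).symm
    · exact disjoint_left.1 hS'x ht.2 (hSx ht.1)
    · exact disjoint_left.1 hSx ht.1 (hS'x ht.2)
    · have := disjoint_card_le hw.1 hx.1 (hU ▸ disjoint_union_left.2 ⟨hSx, hS'x⟩)
      omega
  · refine ⟨hS'w, hSx.resolve_left fun hSx => ?_⟩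
    have hS'x : S' ⊆ x := hS'x.resolve_right fun hS'x => hxw ?_
    · have hSS'disj := disjoint_of_subset_left hSw hS'w.symm
      have := card_le_card (union_subset hSx hS'x)
      rw [card_union_of_disjoint hSS'disj] at this
      omega
    have hcard : #(Y \ S') = r + 1 := by rw [card_sdiff_of_subset hS'.1, hY, hS'.2]; omega
    rw [eq_of_subset_of_card_le (subset_sdiff.2 ⟨hx.1, hS'x.symm⟩) (by rw [hcard, hx.2]),
      eq_of_subset_of_card_le (subset_sdiff.2 ⟨hw.1, hS'w.symm⟩) (by rw [hcard, hw.2])]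

end Finset

namespace Equiv.Perm

variable {α : Type*} [DecidableEq α]

theorem map_ofSubtype_of_subset {X Y : Finset α} (hYX : Y ⊆ X) (τ : Equiv.Perm Y) :
    X.map (ofSubtype τ).toEmbedding = X := by
  refine eq_of_subset_of_card_le (fun x hx => ?_) (card_map _).ge
  obtain ⟨y, hy, rfl⟩ := mem_map.1 hx
  by_cases hyY : y ∈ Y
  · rw [Equiv.toEmbedding_apply, ofSubtype_apply_of_mem τ hyY]
    exact hYX (τ ⟨y, hyY⟩).2
  · rwa [Equiv.toEmbedding_apply, ofSubtype_apply_of_not_mem τ hyY]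

theorem mem_map_ofSubtype_iff_of_notMem {Y s : Finset α} (τ : Equiv.Perm Y) {a : α}
    (ha : a ∉ Y) : a ∈ s.map (ofSubtype τ).toEmbedding ↔ a ∈ s := by
  rw [mem_map_equiv, (Equiv.symm_apply_eq _).2 (ofSubtype_apply_of_not_mem τ ha).symm]

theorem apply_eq_of_map_eq {σ σ' : Equiv.Perm α} {Y : Finset α} {m : ℕ} (hm : 0 < m)
    (hmY : m < #Y) (h : ∀ s ∈ Y.powersetCard m, s.map σ.toEmbedding = s.map σ'.toEmbedding)
    {y : α} (hy : y ∈ Y) : σ y = σ' y := by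
  by_contra hne
  set z := σ'.symm (σ y)
  have hzy : z ≠ y := fun he => hne ((Equiv.symm_apply_eq σ').1 he)
  obtain ⟨s, hys, hsY, hs⟩ := exists_subsuperset_card_eq (n := m)
    (singleton_subset_iff.2 (mem_erase.2 ⟨hzy.symm, hy⟩)) (by rw [card_singleton]; omega)
    (by have := pred_card_le_card_erase (a := z) (s := Y); omega)
  have hσy : σ y ∈ s.map σ'.toEmbedding :=
    h s (mem_powersetCard.2 ⟨hsY.trans (erase_subset _ _), hs⟩) ▸
      mem_map_of_mem _ (singleton_subset_iff.1 hys)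
  rw [mem_map_equiv] at hσy
  exact notMem_erase z Y (hsY hσy)

end Equiv.Perm

section Layers

variable {α : Type*} [DecidableEq α]

structure IsLayerMap (Y : Finset α) (r : ℕ) (g h : Finset α → Finset α) : Prop where
  mapsTo_lower : Set.MapsTo g (Y.powersetCard r : Set (Finset α)) (Y.powersetCard r)
  injOn_lower : Set.InjOn g (Y.powersetCard r : Set (Finset α))
  mapsTo_upper :
    Set.MapsTo h (Y.powersetCard (r + 1) : Set (Finset α)) (Y.powersetCard (r + 1))
  injOn_upper : Set.InjOn h (Y.powersetCard (r + 1) : Set (Finset α))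
  subset_iff : ∀ S ∈ Y.powersetCard r, ∀ w ∈ Y.powersetCard (r + 1), g S ⊆ h w ↔ S ⊆ w

namespace IsLayerMap

variable {Y w : Finset α} {r : ℕ} {g h : Finset α → Finset α}

theorem card_sdiff_erase (hL : IsLayerMap Y r g h) (hw : w ∈ Y.powersetCard (r + 1)) {y : α}
    (hy : y ∈ w) : #(h w \ g (w.erase y)) = 1 := by
  have hS := erase_mem_powersetCard hw hy
  rw [card_sdiff_of_subset ((hL.subset_iff _ hS _ hw).2 (erase_subset _ _)),
    (mem_powersetCard.1 (hL.mapsTo_upper hw)).2, (mem_powersetCard.1 (hL.mapsTo_lower hS)).2]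
  omega

theorem union_eq (hL : IsLayerMap Y r g h) (hw : w ∈ Y.powersetCard (r + 1)) {y a : α}
    (hy : y ∈ w) (ha : a ∈ w) (hya : y ≠ a) : g (w.erase y) ∪ g (w.erase a) = h w := by
  have hSy := erase_mem_powersetCard hw hy
  have hSa := erase_mem_powersetCard hw ha
  have hne : g (w.erase y) ≠ g (w.erase a) := fun he =>
    notMem_erase y w (hL.injOn_lower hSy hSa he ▸ mem_erase.2 ⟨hya, hy⟩)
  have hcard := (mem_powersetCard.1 (hL.mapsTo_upper hw)).2
  exact union_eq_of_card_add_one ((hL.subset_iff _ hSy _ hw).2 (erase_subset _ _))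
    ((hL.subset_iff _ hSa _ hw).2 (erase_subset _ _)) hne
    (by rw [(mem_powersetCard.1 (hL.mapsTo_lower hSy)).2, hcard])
    (by rw [(mem_powersetCard.1 (hL.mapsTo_lower hSa)).2, hcard])

theorem inter_eq (hL : IsLayerMap Y r g h) (hw : w ∈ Y.powersetCard (r + 1)) {v S : Finset α}
    (hv : v ∈ Y.powersetCard (r + 1)) (hwv : w ≠ v) (hS : S ∈ Y.powersetCard r) (hSw : S ⊆ w)
    (hSv : S ⊆ v) : h w ∩ h v = g S := by
  have hcw := (mem_powersetCard.1 (hL.mapsTo_upper hw)).2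
  have hcv := (mem_powersetCard.1 (hL.mapsTo_upper hv)).2
  have hwv' : ¬h w ⊆ h v := fun hsub =>
    hwv (hL.injOn_upper hw hv (eq_of_subset_of_card_le hsub (by rw [hcw, hcv])))
  have hlt : #(h w ∩ h v) < #(h w) :=
    card_lt_card ⟨inter_subset_left, fun hsub => hwv' (hsub.trans inter_subset_right)⟩
  refine (eq_of_subset_of_card_le (subset_inter ((hL.subset_iff _ hS _ hw).2 hSw)
    ((hL.subset_iff _ hS _ hv).2 hSv)) ?_).symm
  rw [(mem_powersetCard.1 (hL.mapsTo_lower hS)).2]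
  omega

theorem sdiff_erase_exchange (hL : IsLayerMap Y r g h) (hw : w ∈ Y.powersetCard (r + 1))
    {a b y : α} (ha : a ∈ w) (hb : b ∈ Y) (hbw : b ∉ w) (hy : y ∈ w) (hya : y ≠ a) :
    h (insert b (w.erase a)) \ g ((insert b (w.erase a)).erase y) = h w \ g (w.erase y) := by
  have hu := exchange_mem_powersetCard hw ha hb hbw
  have hyu : y ∈ insert b (w.erase a) := mem_insert_of_mem (mem_erase.2 ⟨hya, hy⟩)
  have hv := exchange_mem_powersetCard hw hy hb hbw
  refine (eq_of_subset_of_card_le (fun z hz => ?_)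
    (by rw [hL.card_sdiff_erase hw hy, hL.card_sdiff_erase hu hyu])).symm
  rw [mem_sdiff] at hz ⊢
  have hzg : z ∈ g (w.erase a) :=
    (mem_union.1 (hL.union_eq hw hy ha hya ▸ hz.1)).resolve_left hz.2
  refine ⟨(hL.subset_iff _ (erase_mem_powersetCard hw ha) _ hu).2 (subset_insert _ _) hzg,
    fun hz' => hz.2 ?_⟩
  have hsub : (insert b (w.erase a)).erase y ⊆ insert b (w.erase y) := by
    intro x
    simp only [mem_erase, mem_insert]
    tauto
  -- both `w` and `v = insert b (w.erase y)` lie above `w.erase y`, so `h w ∩ h v = g (w.erase y)`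
  rw [← hL.inter_eq hw hv (fun he => hbw (he ▸ mem_insert_self b _))
    (erase_mem_powersetCard hw hy) (erase_subset _ _) (subset_insert _ _)]
  exact mem_inter.2 ⟨hz.1, (hL.subset_iff _ (erase_mem_powersetCard hu hyu) _ hv).2 hsub hz'⟩

theorem eq_of_sdiff_erase_eq (hL : IsLayerMap Y r g h) (hw : w ∈ Y.powersetCard (r + 1))
    {y y' z : α} (hy : y ∈ w) (hy' : y' ∈ w) (hz : h w \ g (w.erase y) = {z})
    (hz' : h w \ g (w.erase y') = {z}) : y = y' := by
  by_contra hne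
  have hzw : z ∈ h w := (mem_sdiff.1 (hz ▸ mem_singleton_self z)).1
  rcases mem_union.1 (hL.union_eq hw hy hy' hne ▸ hzw) with h1 | h1
  · exact (mem_sdiff.1 (hz ▸ mem_singleton_self z)).2 h1
  · exact (mem_sdiff.1 (hz' ▸ mem_singleton_self z)).2 h1

theorem exists_point (hL : IsLayerMap Y r g h) (hY : r < #Y) {y : α} (hy : y ∈ Y) :
    ∃ z ∈ Y, ∀ w ∈ Y.powersetCard (r + 1), y ∈ w → h w \ g (w.erase y) = {z} := by
  obtain ⟨w₀, hyw₀, hw₀Y, hw₀card⟩ :=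
    exists_subsuperset_card_eq (singleton_subset_iff.2 hy) (by simp) (Nat.succ_le_of_lt hY)
  have hw₀ : w₀ ∈ Y.powersetCard (r + 1) := mem_powersetCard.2 ⟨hw₀Y, hw₀card⟩
  rw [singleton_subset_iff] at hyw₀
  obtain ⟨z, hz⟩ := card_eq_one.1 (hL.card_sdiff_erase hw₀ hyw₀)
  refine ⟨z, (mem_powersetCard.1 (hL.mapsTo_upper hw₀)).1
    (mem_sdiff.1 (hz ▸ mem_singleton_self z)).1, fun w hw hyw => ?_⟩
  rw [mem_powersetCard] at hw
  refine induction_on_exchange (p := fun u => h u \ g (u.erase y) = {z})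
    (by rw [hw₀card, hw.2]) hz ?_
  intro u hcard hsu hus hu a ha hat b hbw hbu
  have hu' : u ∈ Y.powersetCard (r + 1) :=
    mem_powersetCard.2 ⟨hus.trans (union_subset hw₀Y hw.1), hcard.trans hw.2⟩
  rw [hL.sdiff_erase_exchange hu' ha (hw.1 hbw) hbu (hsu (mem_inter.2 ⟨hyw₀, hyw⟩))
    (by rintro rfl; exact hat hyw)]
  exact hu

theorem exists_perm (hL : IsLayerMap Y r g h) (hr : 0 < r) (hY : r < #Y) :
    ∃ τ : Equiv.Perm Y,
      (∀ S ∈ Y.powersetCard r, g S = S.map (Equiv.Perm.ofSubtype τ).toEmbedding) ∧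
      ∀ w ∈ Y.powersetCard (r + 1), h w = w.map (Equiv.Perm.ofSubtype τ).toEmbedding := by
  choose φ hφY hφ using fun y : Y => hL.exists_point hY y.2
  have hinj : Function.Injective fun y : Y => (⟨φ y, hφY y⟩ : Y) := by
    intro y y' he
    obtain ⟨w, hyy', hwY, hwc⟩ := exists_subsuperset_card_eq
      (insert_subset y.2 (singleton_subset_iff.2 y'.2)) (card_le_two.trans (by omega))
      (Nat.succ_le_of_lt hY)
    have hw : w ∈ Y.powersetCard (r + 1) := mem_powersetCard.2 ⟨hwY, hwc⟩
    have hyw : y.1 ∈ w := hyy' (mem_insert_self _ _)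
    have hy'w : y'.1 ∈ w := hyy' (mem_insert_of_mem (mem_singleton_self _))
    have hφyy' : φ y = φ y' := congrArg Subtype.val he
    exact Subtype.ext (hL.eq_of_sdiff_erase_eq hw hyw hy'w (hφ y w hw hyw)
      (hφyy' ▸ hφ y' w hw hy'w))
  set τ : Equiv.Perm Y := Equiv.ofBijective _ (Finite.injective_iff_bijective.1 hinj)
  set σ := Equiv.Perm.ofSubtype τ
  have hσ : ∀ y : Y, σ y = φ y := fun y => Equiv.Perm.ofSubtype_apply_of_mem τ y.2
  have hupper : ∀ w ∈ Y.powersetCard (r + 1), h w = w.map σ.toEmbedding := by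
    intro w hw
    refine (eq_of_subset_of_card_le (fun x hx => ?_) ?_).symm
    · obtain ⟨y, hyw, rfl⟩ := mem_map.1 hx
      have hyY := (mem_powersetCard.1 hw).1 hyw
      rw [Equiv.toEmbedding_apply, hσ ⟨y, hyY⟩]
      exact (mem_sdiff.1 (hφ ⟨y, hyY⟩ w hw hyw ▸ mem_singleton_self _)).1
    · rw [card_map, (mem_powersetCard.1 (hL.mapsTo_upper hw)).2, (mem_powersetCard.1 hw).2]
  refine ⟨τ, fun S hS => ?_, hupper⟩
  obtain ⟨hSY, hScard⟩ := mem_powersetCard.1 hS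
  obtain ⟨b, hbY, hbS⟩ := exists_of_ssubset (Finset.ssubset_iff_subset_ne.2
    ⟨hSY, fun he => by rw [he] at hScard; omega⟩)
  have hw : insert b S ∈ Y.powersetCard (r + 1) :=
    mem_powersetCard.2 ⟨insert_subset hbY hSY, by rw [card_insert_of_notMem hbS, hScard]⟩
  have hsub : g S ⊆ h (insert b S) := (hL.subset_iff _ hS _ hw).2 (subset_insert _ _)
  calc g S = h (insert b S) \ (h (insert b S) \ g ((insert b S).erase b)) := by
        rw [erase_insert hbS, Finset.sdiff_sdiff_eq_self hsub]
    _ = S.map σ.toEmbedding := by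
        rw [hφ ⟨b, hbY⟩ _ hw (mem_insert_self b S), hupper _ hw, map_insert,
          sdiff_singleton_eq_erase, Equiv.toEmbedding_apply, hσ ⟨b, hbY⟩, erase_insert]
        rw [mem_map_equiv, ← hσ ⟨b, hbY⟩, Equiv.symm_apply_apply]
        exact hbS

end IsLayerMap

end Layers

namespace SimpleGraph

variable {V : Type*} {G : SimpleGraph V}

theorem Preconnected.coloring_apply_of_mem_graphAut (hG : G.Preconnected) (c : G.Coloring Bool)
    {f : Equiv.Perm V} (hf : f ∈ graphAut G) :
    (∀ v, c (f v) = c v) ∨ ∀ v, c (f v) = !c v := by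
  have key : ∀ u v, c (f u) = c (f v) ↔ c u = c v := by
    intro u v
    obtain ⟨p⟩ := hG u v
    have h := c.even_length_iff_congr (p.map ⟨f, fun h => (hf _ _).2 h⟩)
    rw [Walk.length_map, c.even_length_iff_congr p] at h
    exact Bool.eq_iff_iff.trans (h.symm.trans Bool.eq_iff_iff.symm)
  by_cases h : ∀ v, c (f v) = c v
  · exact Or.inl h
  · push Not at h
    obtain ⟨u, hu⟩ := h
    refine Or.inr fun v => ?_
    have := key u v
    revert hu this
    cases c (f u) <;> cases c u <;> cases c (f v) <;> cases c v <;> simp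

def squareCompletions (G : SimpleGraph V) (a b : V) : Set (V × V) :=
  {p | G.Adj b p.1 ∧ G.Adj p.1 p.2 ∧ G.Adj p.2 a ∧ p.1 ≠ a ∧ p.2 ≠ b}

theorem swap_mem_squareCompletions {a b : V} {p : V × V} :
    p.swap ∈ G.squareCompletions b a ↔ p ∈ G.squareCompletions a b := by
  simp only [squareCompletions, Set.mem_ofPred_eq, Prod.fst_swap, Prod.snd_swap, adj_comm]
  tauto

theorem subsingleton_squareCompletions_comm {a b : V} :
    (G.squareCompletions a b).Subsingleton ↔ (G.squareCompletions b a).Subsingleton := by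
  constructor <;> exact fun h p hp q hq =>
    Prod.swap_injective (h (swap_mem_squareCompletions.2 hp) (swap_mem_squareCompletions.2 hq))

theorem preimage_squareCompletions {f : Equiv.Perm V} (hf : f ∈ graphAut G) (a b : V) :
    Prod.map f f ⁻¹' G.squareCompletions (f a) (f b) = G.squareCompletions a b := by
  ext ⟨z, x⟩
  simp only [squareCompletions, Set.mem_preimage, Prod.map_apply, Set.mem_ofPred_eq, hf _ _,
    f.injective.ne_iff]

theorem subsingleton_squareCompletions_apply_iff {f : Equiv.Perm V} (hf : f ∈ graphAut G)
    (a b : V) : (G.squareCompletions (f a) (f b)).Subsingleton ↔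
      (G.squareCompletions a b).Subsingleton := by
  rw [← preimage_squareCompletions hf a b]
  refine ⟨fun h => h.preimage (f.injective.prodMap f.injective), fun h => ?_⟩
  rw [← Set.image_preimage_eq (G.squareCompletions (f a) (f b))
    (f.surjective.prodMap f.surjective)]
  exact h.image _

end SimpleGraph

section HyperStar

variable {n k : ℕ}

namespace hsVert

theorem Icc_two_subset : Icc 2 n ⊆ Icc 1 n := Icc_subset_Icc_left (by norm_num)

theorem one_notMem_of_mem_powersetCard {S : Finset ℕ} {m : ℕ}
    (hS : S ∈ (Icc 2 n).powersetCard m) : 1 ∉ S :=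
  fun h => by simpa using (mem_powersetCard.1 hS).1 h

theorem erase_one_mem_powersetCard (v : hsVert n k) (hv : 1 ∈ v.1) :
    v.1.erase 1 ∈ (Icc 2 n).powersetCard (k - 1) := by
  refine mem_powersetCard.2 ⟨fun x hx => ?_, by rw [card_erase_of_mem hv, v.2.2]⟩
  have := v.2.1 (mem_of_mem_erase hx)
  have := ne_of_mem_erase hx
  simp only [mem_Icc] at *
  omega

theorem mem_powersetCard_of_one_notMem (v : hsVert n k) (hv : 1 ∉ v.1) :
    v.1 ∈ (Icc 2 n).powersetCard k := by
  refine mem_powersetCard.2 ⟨fun x hx => ?_, v.2.2⟩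
  have := v.2.1 hx
  have : x ≠ 1 := by rintro rfl; exact hv hx
  simp only [mem_Icc] at *
  omega

def ofLower (hk : 0 < k) (S : Finset ℕ) (hS : S ∈ (Icc 2 (2 * k)).powersetCard (k - 1)) :
    hsVert (2 * k) k :=
  ⟨insert 1 S, insert_subset (by simp; omega) ((mem_powersetCard.1 hS).1.trans Icc_two_subset),
    by rw [card_insert_of_notMem (one_notMem_of_mem_powersetCard hS), (mem_powersetCard.1 hS).2]
       omega⟩

def ofUpper (w : Finset ℕ) (hw : w ∈ (Icc 2 n).powersetCard k) : hsVert n k :=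
  ⟨w, (mem_powersetCard.1 hw).1.trans Icc_two_subset, (mem_powersetCard.1 hw).2⟩

theorem ofLower_erase_one (hk : 0 < k) (v : hsVert (2 * k) k) (hv : 1 ∈ v.1) :
    ofLower hk (v.1.erase 1) (erase_one_mem_powersetCard v hv) = v :=
  Subtype.ext (insert_erase hv)

def compl (k : ℕ) : Equiv.Perm (hsVert (2 * k) k) :=
  Function.Involutive.toPerm
    (fun v => ⟨Icc 1 (2 * k) \ v.1, sdiff_subset, by
      rw [card_sdiff_of_subset v.2.1, Nat.card_Icc, v.2.2]; omega⟩)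
    (fun v => Subtype.ext (Finset.sdiff_sdiff_eq_self v.2.1))

theorem compl_val (v : hsVert (2 * k) k) : (compl k v).1 = Icc 1 (2 * k) \ v.1 := rfl

theorem compl_compl (v : hsVert (2 * k) k) : compl k (compl k v) = v :=
  Subtype.ext (Finset.sdiff_sdiff_eq_self v.2.1)

theorem compl_mul_self : compl k * compl k = 1 := Equiv.ext compl_compl

theorem one_mem_compl (hk : 0 < k) {v : hsVert (2 * k) k} : 1 ∈ (compl k v).1 ↔ 1 ∉ v.1 := by
  rw [compl_val, mem_sdiff, mem_Icc]
  exact and_iff_right (by omega)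

theorem eq_compl_iff_disjoint {v w : hsVert (2 * k) k} : w = compl k v ↔ Disjoint v.1 w.1 := by
  refine ⟨fun h => h ▸ disjoint_sdiff, fun h => Subtype.ext ?_⟩
  refine eq_of_subset_of_card_le (subset_sdiff.2 ⟨w.2.1, h.symm⟩) ?_
  rw [(compl k v).2.2, w.2.2]

theorem eq_compl_iff_disjoint_erase_one {v w : hsVert (2 * k) k} (hw : 1 ∉ w.1) :
    w = compl k v ↔ Disjoint (v.1.erase 1) w.1 := by
  rw [eq_compl_iff_disjoint, disjoint_erase_comm, erase_eq_of_notMem hw]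

theorem card_compl_inter_compl (v w : hsVert (2 * k) k) :
    #((compl k v).1 ∩ (compl k w).1) = #(v.1 ∩ w.1) := by
  rw [compl_val, compl_val, ← sdiff_union_distrib,
    card_sdiff_of_subset (union_subset v.2.1 w.2.1), Nat.card_Icc]
  have := card_union_add_card_inter v.1 w.1
  rw [v.2.2, w.2.2] at this
  omega

def relabel (τ : Equiv.Perm (Icc 2 n)) : Equiv.Perm (hsVert n k) :=
  (Equiv.Perm.ofSubtype τ).finsetCongr.subtypeEquiv fun s => by
    rw [Equiv.finsetCongr_apply, card_map,
      ← map_subset_map (f := (Equiv.Perm.ofSubtype τ).toEmbedding),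
      Equiv.Perm.map_ofSubtype_of_subset Icc_two_subset τ]

theorem relabel_val (τ : Equiv.Perm (Icc 2 n)) (v : hsVert n k) :
    (relabel τ v).1 = v.1.map (Equiv.Perm.ofSubtype τ).toEmbedding := rfl

theorem one_mem_relabel (τ : Equiv.Perm (Icc 2 n)) {v : hsVert n k} :
    1 ∈ (relabel τ v).1 ↔ 1 ∈ v.1 :=
  Equiv.Perm.mem_map_ofSubtype_iff_of_notMem τ (by simp)

theorem relabel_compl (τ : Equiv.Perm (Icc 2 (2 * k))) (v : hsVert (2 * k) k) :
    relabel τ (compl k v) = compl k (relabel τ v) := by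
  apply Subtype.ext
  rw [relabel_val, compl_val, compl_val, relabel_val, Finset.map_sdiff,
    Equiv.Perm.map_ofSubtype_of_subset Icc_two_subset τ]

theorem relabel_injective (hk : 2 ≤ k) :
    Function.Injective (relabel : Equiv.Perm (Icc 2 (2 * k)) → Equiv.Perm (hsVert (2 * k) k)) := by
  intro τ τ' h
  apply Equiv.Perm.ofSubtype_injective
  ext y
  by_cases hy : y ∈ Icc 2 (2 * k)
  · refine Equiv.Perm.apply_eq_of_map_eq (m := k) (by omega) (by rw [Nat.card_Icc]; omega)
      (fun w hw => ?_) hy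
    exact congrArg Subtype.val (Equiv.ext_iff.1 h (ofUpper w hw))
  · rw [Equiv.Perm.ofSubtype_apply_of_not_mem _ hy, Equiv.Perm.ofSubtype_apply_of_not_mem _ hy]

noncomputable def extendToFinset (f : Equiv.Perm (hsVert n k)) : Finset ℕ → Finset ℕ :=
  Function.extend Subtype.val (fun v => (f v).1) id

theorem extendToFinset_val (f : Equiv.Perm (hsVert n k)) (v : hsVert n k) :
    extendToFinset f v.1 = (f v).1 :=
  Subtype.val_injective.extend_apply _ _ v

end hsVert

open hsVert

namespace HS

theorem one_mem_iff_of_adj {v w : hsVert n k} (h : (HS n k).Adj v w) : 1 ∈ v.1 ↔ 1 ∉ w.1 := by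
  rw [HS, SimpleGraph.fromRel_adj] at h
  tauto

theorem adj_iff_of_one_mem {v w : hsVert n k} (hv : 1 ∈ v.1) (hw : 1 ∉ w.1) :
    (HS n k).Adj v w ↔ v.1.erase 1 ⊆ w.1 := by
  have hcard := card_inter_eq_card_sub_one_iff hv hw
  rw [v.2.2] at hcard
  rw [HS, SimpleGraph.fromRel_adj, ← hcard]
  refine ⟨fun h => (h.2.resolve_right fun h' => hw h'.2.1).1, fun h => ⟨?_, Or.inl ⟨h, hv, hw⟩⟩⟩
  rintro rfl
  exact hw hv

theorem adj_ofLower_ofUpper_iff (hk : 0 < k) {S w : Finset ℕ}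
    (hS : S ∈ (Icc 2 (2 * k)).powersetCard (k - 1)) (hw : w ∈ (Icc 2 (2 * k)).powersetCard k) :
    (HS (2 * k) k).Adj (ofLower hk S hS) (ofUpper w hw) ↔ S ⊆ w := by
  rw [adj_iff_of_one_mem (mem_insert_self 1 S) (one_notMem_of_mem_powersetCard hw)]
  simp only [ofLower, ofUpper]
  rw [erase_insert (one_notMem_of_mem_powersetCard hS)]

theorem relabel_mem_graphAut (τ : Equiv.Perm (Icc 2 n)) : relabel τ ∈ graphAut (HS n k) := by
  intro v w
  simp only [HS, SimpleGraph.fromRel_adj, ← map_inter, card_map, relabel_val,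
    Equiv.Perm.mem_map_ofSubtype_iff_of_notMem τ (by simp : 1 ∉ Icc 2 n),
    (relabel τ).injective.ne_iff]

theorem compl_mem_graphAut (hk : 0 < k) : compl k ∈ graphAut (HS (2 * k) k) := by
  intro v w
  rw [HS, SimpleGraph.fromRel_adj, SimpleGraph.fromRel_adj, (compl k).injective.ne_iff,
    card_compl_inter_compl, card_compl_inter_compl, one_mem_compl hk, one_mem_compl hk,
    inter_comm]
  tauto

theorem preconnected (hk : 0 < k) : (HS (2 * k) k).Preconnected := by
  have hlower : ∀ S hS S' hS',
      (HS (2 * k) k).Reachable (ofLower hk S hS) (ofLower hk S' hS') := by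
    intro S hS S' hS'
    rw [mem_powersetCard] at hS'
    refine induction_on_exchange (p := fun T => ∀ hT, (HS (2 * k) k).Reachable
      (ofLower hk S hS) (ofLower hk T hT)) (by rw [(mem_powersetCard.1 hS).2, hS'.2])
      (fun _ => .refl _) ?_ (mem_powersetCard.2 hS')
    intro T hcard _ hT hreach a _ _ b hb hbT _
    have hTmem : T ∈ (Icc 2 (2 * k)).powersetCard (k - 1) := mem_powersetCard.2
      ⟨hT.trans (union_subset (mem_powersetCard.1 hS).1 hS'.1), hcard.trans hS'.2⟩
    have hw : insert b T ∈ (Icc 2 (2 * k)).powersetCard k := mem_powersetCard.2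
      ⟨insert_subset (hS'.1 hb) (mem_powersetCard.1 hTmem).1,
        by rw [card_insert_of_notMem hbT, (mem_powersetCard.1 hTmem).2]; omega⟩
    exact (hreach hTmem).trans
      (((adj_ofLower_ofUpper_iff hk hTmem hw).2 (subset_insert b T)).reachable.trans
      ((adj_ofLower_ofUpper_iff hk _ hw).2
        (insert_subset_insert b (erase_subset a T))).reachable.symm)
  have hbase : ∀ v, ∃ S hS, (HS (2 * k) k).Reachable v (ofLower hk S hS) := by
    intro v
    by_cases hv : 1 ∈ v.1
    · exact ⟨_, erase_one_mem_powersetCard v hv, by rw [ofLower_erase_one hk v hv]⟩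
    · obtain ⟨a, ha⟩ := card_pos.1 (by rw [v.2.2]; exact hk)
      have hw := mem_powersetCard_of_one_notMem v hv
      have hS : v.1.erase a ∈ (Icc 2 (2 * k)).powersetCard (k - 1) := mem_powersetCard.2
        ⟨(erase_subset a _).trans (mem_powersetCard.1 hw).1, by rw [card_erase_of_mem ha, v.2.2]⟩
      exact ⟨_, hS, ((adj_ofLower_ofUpper_iff hk hS hw).2 (erase_subset a _)).reachable.symm⟩
  intro u v
  obtain ⟨S, hS, hu⟩ := hbase u
  obtain ⟨S', hS', hv⟩ := hbase v
  exact hu.trans ((hlower S hS S' hS').trans hv.symm)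

def coloring : (HS n k).Coloring Bool :=
  SimpleGraph.Coloring.mk (fun v => decide (1 ∈ v.1)) fun h => by simp [one_mem_iff_of_adj h]

theorem coloring_apply (v : hsVert n k) : coloring v = decide (1 ∈ v.1) := rfl

theorem isLayerMap (hk : 0 < k) {f : Equiv.Perm (hsVert (2 * k) k)}
    (hf : f ∈ graphAut (HS (2 * k) k)) (hf1 : ∀ v, 1 ∈ (f v).1 ↔ 1 ∈ v.1) :
    IsLayerMap (Icc 2 (2 * k)) (k - 1) (fun S => (extendToFinset f (insert 1 S)).erase 1)
      (extendToFinset f) := by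
  have hlower : ∀ S (hS : S ∈ (Icc 2 (2 * k)).powersetCard (k - 1)),
      extendToFinset f (insert 1 S) = (f (ofLower hk S hS)).1 :=
    fun S hS => extendToFinset_val f (ofLower hk S hS)
  have hupper : ∀ w (hw : w ∈ (Icc 2 (2 * k)).powersetCard k),
      extendToFinset f w = (f (ofUpper w hw)).1 :=
    fun w hw => extendToFinset_val f (ofUpper w hw)
  have h1lower : ∀ S (hS : S ∈ (Icc 2 (2 * k)).powersetCard (k - 1)),
      1 ∈ (f (ofLower hk S hS)).1 :=
    fun S hS => (hf1 _).2 (mem_insert_self 1 S)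
  have h1upper : ∀ w (hw : w ∈ (Icc 2 (2 * k)).powersetCard k), 1 ∉ (f (ofUpper w hw)).1 :=
    fun w hw => (hf1 _).not.2 (one_notMem_of_mem_powersetCard hw)
  have hk1 : k - 1 + 1 = k := by omega
  refine ⟨fun S hS => ?_, fun S hS S' hS' he => ?_, fun w hw => ?_, fun w hw w' hw' he => ?_,
    fun S hS w hw => ?_⟩ <;> simp only [hk1, mem_coe] at *
  · rw [hlower S hS]
    exact erase_one_mem_powersetCard _ (h1lower S hS)
  · rw [hlower S hS, hlower S' hS'] at he
    have := f.injective (a₁ := ofLower hk S hS) (a₂ := ofLower hk S' hS') (Subtype.ext (by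
      rw [← insert_erase (h1lower S hS), he, insert_erase (h1lower S' hS')]))
    rw [← erase_insert (one_notMem_of_mem_powersetCard hS),
      ← erase_insert (one_notMem_of_mem_powersetCard hS')]
    exact congrArg (fun v : hsVert (2 * k) k => v.1.erase 1) this
  · rw [hupper w hw]
    exact mem_powersetCard_of_one_notMem _ (h1upper w hw)
  · rw [hupper w hw, hupper w' hw'] at he
    exact congrArg Subtype.val (f.injective (Subtype.ext he))
  · rw [hlower S hS, hupper w hw, ← adj_iff_of_one_mem (h1lower S hS) (h1upper w hw), hf]
    exact adj_ofLower_ofUpper_iff hk hS hw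

theorem exists_eq_relabel (hk : 2 ≤ k) {f : Equiv.Perm (hsVert (2 * k) k)}
    (hf : f ∈ graphAut (HS (2 * k) k)) (hf1 : ∀ v, 1 ∈ (f v).1 ↔ 1 ∈ v.1) :
    ∃ τ, f = relabel τ := by
  obtain ⟨τ, hlower, hupper⟩ :=
    (isLayerMap (by omega) hf hf1).exists_perm (by omega) (by simp; omega)
  rw [Nat.sub_add_cancel (by omega : 1 ≤ k)] at hupper
  refine ⟨τ, Equiv.ext fun v => Subtype.ext ?_⟩
  rw [relabel_val]
  by_cases hv : 1 ∈ v.1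
  · have := hlower _ (erase_one_mem_powersetCard v hv)
    rw [insert_erase hv, extendToFinset_val] at this
    rw [← insert_erase ((hf1 v).2 hv), this]
    conv_rhs => rw [← insert_erase hv, map_insert, Equiv.toEmbedding_apply,
      Equiv.Perm.ofSubtype_apply_of_not_mem τ (by simp)]
  · rw [← extendToFinset_val, hupper _ (mem_powersetCard_of_one_notMem v hv)]

theorem exists_eq_relabel_mul (hk : 2 ≤ k) {f : Equiv.Perm (hsVert (2 * k) k)}
    (hf : f ∈ graphAut (HS (2 * k) k)) :
    ∃ τ b, f = relabel τ * bif b then compl k else 1 := by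
  rcases (preconnected (by omega)).coloring_apply_of_mem_graphAut coloring hf with h | h
  · obtain ⟨τ, rfl⟩ := exists_eq_relabel hk hf fun v => by simpa [coloring_apply] using h v
    exact ⟨τ, false, (mul_one _).symm⟩
  · obtain ⟨τ, hτ⟩ := exists_eq_relabel hk (mul_mem hf (compl_mem_graphAut (by omega)))
      fun v => by simpa [coloring_apply, one_mem_compl (by omega : 0 < k)] using h (compl k v)
    refine ⟨τ, true, ?_⟩
    rw [cond_true, ← hτ, mul_assoc, compl_mul_self, mul_one]

theorem relabel_mul_mem_graphAut (hk : 0 < k) (τ : Equiv.Perm (Icc 2 (2 * k))) (b : Bool) :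
    relabel τ * (bif b then compl k else 1) ∈ graphAut (HS (2 * k) k) :=
  mul_mem (relabel_mem_graphAut τ) (by cases b <;> simp [compl_mem_graphAut hk, one_mem])

theorem relabel_mul_injective (hk : 2 ≤ k) :
    Function.Injective fun p : Equiv.Perm (Icc 2 (2 * k)) × Bool =>
      relabel p.1 * (bif p.2 then compl k else 1) := by
  rintro ⟨τ, b⟩ ⟨τ', b'⟩ h
  simp only at h
  obtain ⟨s, hs⟩ := powersetCard_nonempty.2 (by rw [Nat.card_Icc]; omega :
    k ≤ #(Icc 1 (2 * k)))
  set v : hsVert (2 * k) k := ⟨s, mem_powersetCard.1 hs⟩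
  have hone : ∀ τ b, 1 ∈ ((relabel τ * (bif b then compl k else 1) :
      Equiv.Perm (hsVert (2 * k) k)) v).1 ↔ (1 ∈ s ↔ b = false) := by
    intro τ b
    cases b <;> simp [one_mem_relabel, one_mem_compl (by omega : 0 < k), v]
  have hb : b = b' := by
    have := hone τ b
    rw [h, hone τ' b'] at this
    cases b <;> cases b' <;> simp_all
  subst hb
  rw [relabel_injective hk (mul_right_cancel h)]

noncomputable def autEquiv (hk : 2 ≤ k) :
    Equiv.Perm (Icc 2 (2 * k)) × Bool ≃ graphAut (HS (2 * k) k) :=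
  Equiv.ofBijective
    (fun p => ⟨_, relabel_mul_mem_graphAut (by omega) p.1 p.2⟩)
    ⟨fun _ _ h => relabel_mul_injective hk (congrArg Subtype.val h), fun f => by
      obtain ⟨τ, b, hf⟩ := exists_eq_relabel_mul hk f.2
      exact ⟨(τ, b), Subtype.ext hf.symm⟩⟩

end HS

theorem HS_le_FHS : HS (2 * k) k ≤ FHS k := by
  intro v w h
  rw [HS, SimpleGraph.fromRel_adj] at h
  rw [FHS, SimpleGraph.fromRel_adj]
  tauto

namespace FHS

theorem adj_iff (hk : 0 < k) {v w : hsVert (2 * k) k} :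
    (FHS k).Adj v w ↔ (HS (2 * k) k).Adj v w ∨ w = compl k v := by
  have hwv : w.1 = Icc 1 (2 * k) \ v.1 ↔ w = compl k v := by
    rw [← compl_val, ← Subtype.ext_iff]
  have hvw : v.1 = Icc 1 (2 * k) \ w.1 ↔ w = compl k v := by
    rw [← compl_val, ← Subtype.ext_iff, ← (compl k).injective.eq_iff, compl_compl, eq_comm]
  have hne : w = compl k v → v ≠ w := by
    rintro rfl h
    have hcard := v.2.2
    rw [(disjoint_self_iff_empty _).1 (eq_compl_iff_disjoint.1 h), card_empty] at hcard
    omega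
  rw [FHS, HS, SimpleGraph.fromRel_adj, SimpleGraph.fromRel_adj, hvw, hwv]
  tauto

theorem one_mem_iff_of_adj (hk : 0 < k) {v w : hsVert (2 * k) k} (h : (FHS k).Adj v w) :
    1 ∈ v.1 ↔ 1 ∉ w.1 := by
  rcases (adj_iff hk).1 h with h | rfl
  · exact HS.one_mem_iff_of_adj h
  · rw [one_mem_compl hk]
    tauto

theorem adj_iff_of_one_mem (hk : 0 < k) {v w : hsVert (2 * k) k} (hv : 1 ∈ v.1)
    (hw : 1 ∉ w.1) : (FHS k).Adj v w ↔ v.1.erase 1 ⊆ w.1 ∨ Disjoint (v.1.erase 1) w.1 := by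
  rw [adj_iff hk, HS.adj_iff_of_one_mem hv hw, eq_compl_iff_disjoint_erase_one hw]

theorem mem_graphAut_of_commute (hk : 0 < k) {e : Equiv.Perm (hsVert (2 * k) k)}
    (he : e ∈ graphAut (HS (2 * k) k)) (hc : ∀ v, e (compl k v) = compl k (e v)) :
    e ∈ graphAut (FHS k) := by
  intro v w
  rw [adj_iff hk, adj_iff hk, he, ← hc, e.injective.eq_iff]

theorem eq_compl_of_mem_squareCompletions (hk : 3 ≤ k) {u w : hsVert (2 * k) k}
    {p : hsVert (2 * k) k × hsVert (2 * k) k} (hu : 1 ∈ u.1) (huw : (HS (2 * k) k).Adj u w)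
    (hp : p ∈ (FHS k).squareCompletions u w) : p = (compl k w, compl k u) := by
  obtain ⟨z, x⟩ := p
  obtain ⟨hwz, hzx, hxu, hzu, hxw⟩ := hp
  have hk0 : 0 < k := by omega
  have hw : 1 ∉ w.1 := (HS.one_mem_iff_of_adj huw).1 hu
  have hz : 1 ∈ z.1 := by have := one_mem_iff_of_adj hk0 hwz; tauto
  have hx : 1 ∉ x.1 := (one_mem_iff_of_adj hk0 hzx).1 hz
  have hupper : ∀ v : hsVert (2 * k) k, 1 ∉ v.1 →
      v.1 ∈ (Icc 2 (2 * k)).powersetCard (k - 1 + 1) :=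
    fun v hv => by rw [Nat.sub_add_cancel (by omega)]; exact mem_powersetCard_of_one_notMem v hv
  obtain ⟨hzw, hux⟩ := disjoint_and_disjoint_of_square (r := k - 1) (by omega)
    (by rw [Nat.card_Icc]; omega) (erase_one_mem_powersetCard u hu)
    (erase_one_mem_powersetCard z hz) (hupper w hw) (hupper x hx)
    ((HS.adj_iff_of_one_mem hu hw).1 huw) ((adj_iff_of_one_mem hk0 hz hw).1 hwz.symm)
    ((adj_iff_of_one_mem hk0 hz hx).1 hzx) ((adj_iff_of_one_mem hk0 hu hx).1 hxu.symm)
    (fun he => hzu (Subtype.ext (by rw [← insert_erase hz, ← insert_erase hu, he])))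
    (fun he => hxw (Subtype.ext he))
  rw [← eq_compl_iff_disjoint_erase_one hw, ← (compl k).injective.eq_iff,
    hsVert.compl_compl] at hzw
  rw [← eq_compl_iff_disjoint_erase_one hx] at hux
  rw [← hzw, hux]

theorem not_subsingleton_squareCompletions_compl (hk : 2 ≤ k) {v : hsVert (2 * k) k}
    (hv : 1 ∈ v.1) : ¬((FHS k).squareCompletions v (compl k v)).Subsingleton := by
  have hk0 : 0 < k := by omega
  set w := compl k v
  have hw : 1 ∉ w.1 := fun h => (one_mem_compl hk0).1 h hv
  have hvw : Disjoint v.1 w.1 := eq_compl_iff_disjoint.1 rfl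
  have hwU := mem_powersetCard_of_one_notMem w hw
  have hS : ∀ t ∈ w.1, w.1.erase t ∈ (Icc 2 (2 * k)).powersetCard (k - 1) := fun t ht =>
    mem_powersetCard.2 ⟨(erase_subset _ _).trans (mem_powersetCard.1 hwU).1,
      by rw [card_erase_of_mem ht, w.2.2]⟩
  -- each `t ∈ w` gives the 4-cycle `v, w, z, compl z` with `z = insert 1 (w.erase t)`
  have hmem : ∀ t (ht : t ∈ w.1), (ofLower hk0 _ (hS t ht), compl k (ofLower hk0 _ (hS t ht))) ∈
      (FHS k).squareCompletions v w := by
    intro t ht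
    set z := ofLower hk0 _ (hS t ht)
    have hzw : (HS (2 * k) k).Adj z w := by
      rw [HS.adj_iff_of_one_mem (mem_insert_self _ _) hw]
      simp only [z, ofLower]
      rw [erase_insert (one_notMem_of_mem_powersetCard (hS t ht))]
      exact erase_subset t w.1
    have hzv : z ≠ v := by
      intro he
      obtain ⟨s, hs⟩ := card_pos.1 (by rw [(mem_powersetCard.1 (hS t ht)).2]; omega :
        0 < #(w.1.erase t))
      exact disjoint_left.1 hvw (he ▸ mem_insert_of_mem hs) (mem_of_mem_erase hs)
    refine ⟨(HS_le_FHS hzw).symm, (adj_iff hk0).2 (Or.inr rfl), HS_le_FHS ?_, hzv,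
      fun he => hzv ((compl k).injective he)⟩
    have := (HS.compl_mem_graphAut hk0 z w).2 hzw
    rwa [hsVert.compl_compl] at this
  obtain ⟨t₁, ht₁, t₂, ht₂, hne⟩ := one_lt_card.1 (by rw [w.2.2]; omega : 1 < #w.1)
  intro hsub
  have := congrArg (fun p => (p.1 : hsVert (2 * k) k).1.erase 1)
    (hsub (hmem t₁ ht₁) (hmem t₂ ht₂))
  simp only [ofLower, erase_insert (one_notMem_of_mem_powersetCard (hS _ ht₁)),
    erase_insert (one_notMem_of_mem_powersetCard (hS _ ht₂))] at this
  exact notMem_erase t₁ w.1 (this ▸ mem_erase.2 ⟨hne, ht₁⟩)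

end FHS

theorem HS.adj_iff_subsingleton_squareCompletions (hk : 3 ≤ k) {a b : hsVert (2 * k) k}
    (hab : (FHS k).Adj a b) :
    (HS (2 * k) k).Adj a b ↔ ((FHS k).squareCompletions a b).Subsingleton := by
  constructor
  · intro h
    wlog ha : 1 ∈ a.1 generalizing a b
    · exact SimpleGraph.subsingleton_squareCompletions_comm.1 (this hab.symm h.symm
        (by have := HS.one_mem_iff_of_adj h; tauto))
    exact fun p hp q hq => (FHS.eq_compl_of_mem_squareCompletions hk ha h hp).trans
      (FHS.eq_compl_of_mem_squareCompletions hk ha h hq).symm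
  · intro hs
    by_contra h
    obtain rfl : b = compl k a := ((FHS.adj_iff (by omega)).1 hab).resolve_left h
    by_cases ha : 1 ∈ a.1
    · exact FHS.not_subsingleton_squareCompletions_compl (by omega) ha hs
    · refine FHS.not_subsingleton_squareCompletions_compl (by omega)
        ((one_mem_compl (by omega)).2 ha) ?_
      rw [hsVert.compl_compl]
      exact SimpleGraph.subsingleton_squareCompletions_comm.1 hs

theorem graphAut_FHS_le (hk : 3 ≤ k) : graphAut (FHS k) ≤ graphAut (HS (2 * k) k) := by
  have key : ∀ a b, (HS (2 * k) k).Adj a b ↔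
      (FHS k).Adj a b ∧ ((FHS k).squareCompletions a b).Subsingleton := fun a b =>
    ⟨fun h => ⟨HS_le_FHS h, (HS.adj_iff_subsingleton_squareCompletions hk (HS_le_FHS h)).1 h⟩,
      fun h => (HS.adj_iff_subsingleton_squareCompletions hk h.1).2 h.2⟩
  intro f hf a b
  rw [key, key, hf, SimpleGraph.subsingleton_squareCompletions_apply_iff hf]

theorem graphAut_HS_le (hk : 2 ≤ k) : graphAut (HS (2 * k) k) ≤ graphAut (FHS k) := by
  intro f hf
  obtain ⟨τ, b, rfl⟩ := HS.exists_eq_relabel_mul hk hf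
  refine mul_mem (FHS.mem_graphAut_of_commute (by omega) (HS.relabel_mem_graphAut τ)
    (relabel_compl τ)) ?_
  cases b
  · exact one_mem _
  · exact FHS.mem_graphAut_of_commute (by omega) (HS.compl_mem_graphAut (by omega)) fun _ => rfl

end HyperStar

/-- For `k ≥ 3`, the automorphism group of `FHS(2k,k)` equals that of `HS(2k,k)` (as
permutation groups on the common vertex set); in particular `|Aut(FHS(2k,k))| = 2·(2k-1)!`. -/
theorem stmt17 (k : ℕ) (hk : 3 ≤ k) :
    graphAut (FHS k) = graphAut (HS (2*k) k) ∧
    Nat.card ↥(graphAut (FHS k)) = 2 * Nat.factorial (2*k - 1) := by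
  have hAut : graphAut (FHS k) = graphAut (HS (2*k) k) :=
    le_antisymm (graphAut_FHS_le hk) (graphAut_HS_le (by omega))
  refine ⟨hAut, ?_⟩
  rw [hAut, ← Nat.card_congr (HS.autEquiv (by omega)), Nat.card_prod, Nat.card_perm,
    Nat.card_eq_fintype_card (α := Icc 2 (2 * k)), Fintype.card_coe, Nat.card_Icc,
    Nat.card_eq_fintype_card (α := Bool), Fintype.card_bool, mul_comm,
    show 2 * k + 1 - 2 = 2 * k - 1 by omega]
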